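/- Ihara–Bass formula: for a finite graph G = (V,E) with adjacency matrix A, non-backtracking matrix B, and degree diagonal matrix D, we have for all z ∈ ℂ: det(z·1_E − B) = (z² − 1)^{χ−1} · det(z²·1_V − zA + D − 1_V), where χ = |E|/2 − |V| + 1 (here |E| counts oriented edges, so |E|/2 is the number of undirected edges). -/

import Mathlib

/-- A finite graph given by oriented edges: each edge `e` has an origin `src e`, a
destination `tgt e`, and the edge set carries a fixed-point-free involution
`e ↦ inv e` with `tgt (inv e) = src e`. -/
structure OrientedGraph (V E : Type*) where
  src : E → V
  tgt : E → V
  inv : E → E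
  inv_inv : ∀ e, inv (inv e) = e
  inv_ne : ∀ e, inv e ≠ e
  tgt_inv : ∀ e, tgt (inv e) = src e

variable {V E : Type*} [Fintype V] [Fintype E] [DecidableEq V] [DecidableEq E]

/-- The adjacency matrix: `A v u` is the number of oriented edges from `u` to `v`. -/
noncomputable def adjMatrix (G : OrientedGraph V E) : Matrix V V ℂ :=
  Matrix.of fun v u =>
    ((Finset.univ.filter fun e : E => G.src e = u ∧ G.tgt e = v).card : ℂ)

/-- The non-backtracking matrix `B`, acting by `(Bφ)(f) = ∑_{e : e₊ = f₋, e ≠ f⁻¹} φ(e)`. -/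
noncomputable def nbMatrix (G : OrientedGraph V E) : Matrix E E ℂ :=
  Matrix.of fun f e => if G.tgt e = G.src f ∧ e ≠ G.inv f then 1 else 0

/-- The degree of a vertex: the number of outgoing edges. -/
def gdeg (G : OrientedGraph V E) (v : V) : ℕ :=
  (Finset.univ.filter fun e : E => G.src e = v).card

/-- `G` is `d`-regular: every vertex has degree `d`. -/
def RegularGraph (G : OrientedGraph V E) (d : ℕ) : Prop :=
  ∀ v : V, gdeg G v = d

/-- The degree diagonal matrix `D`. -/
noncomputable def degMatrix (G : OrientedGraph V E) : Matrix V V ℂ :=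
  Matrix.diagonal fun v => (gdeg G v : ℂ)

/-!
Let `S`, `T : Matrix V E` be the source and target incidence matrices and `J` the permutation
matrix of `e ↦ e⁻¹`. Then `B = SᵀT − J`, `A = TSᵀ`, `D = SSᵀ = TTᵀ`, `J² = 1` and `JSᵀ = Tᵀ`.
Since `(z + J)(z − J) = z² − 1`, one has Bass's block identity
`[1 0; Sᵀ 1] [(z² − 1) T; 0 z − B] = [z² − zA + D − 1 T; 0 z + J] [1 0; zSᵀ − Tᵀ 1]`,
whose determinant reads `(z² − 1)^|V| det(z − B) = det(z + J) det(z² − zA + D − 1)`.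
Pairing every edge with its inverse makes `z + J` block diagonal with blocks `[z 1; 1 z]`,
so `det(z + J) = (z² − 1)^m`. No division by `z² − 1` occurs, so the identity holds for all `z`.
-/

open Matrix Kronecker

universe u

theorem Function.Involutive.exists_fin_two_prod_equiv {α : Type u} {σ : α → α}
    (hσ : Function.Involutive σ) (hfix : ∀ a, σ a ≠ a) :
    ∃ (β : Type u) (φ : Fin 2 × β ≃ α), ∀ i b, σ (φ (i, b)) = φ (i.rev, b) := by
  let _ : LinearOrder α := IsWellOrder.linearOrder WellOrderingRel
  have hlt : ∀ a, ¬ a < σ a → σ a < σ (σ a) := fun a ha => by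
    rw [hσ a]; exact lt_of_le_of_ne (not_lt.mp ha) (hfix a)
  let φ : Fin 2 × {a // a < σ a} ≃ α :=
    { toFun := fun p => if p.1 = 0 then p.2.1 else σ p.2.1
      invFun := fun a => if ha : a < σ a then (0, ⟨a, ha⟩) else (1, ⟨σ a, hlt a ha⟩)
      left_inv := by
        rintro ⟨i, a, ha⟩
        fin_cases i
        · simp [ha]
        · simp [hσ a, lt_asymm ha]
      right_inv := by
        intro a
        by_cases ha : a < σ a <;> simp [ha, hσ a] }
  refine ⟨_, φ, fun i b => ?_⟩
  fin_cases i <;> simp [φ, hσ b.1]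

theorem Matrix.det_smul_one_add_of_involutive {R α : Type*} [CommRing R] [Fintype α]
    [DecidableEq α] {σ : α → α} (hσ : Function.Involutive σ) (hfix : ∀ a, σ a ≠ a) {m : ℕ}
    (hm : Fintype.card α = 2 * m) (z : R) :
    (z • 1 + of fun a b => if b = σ a then (1 : R) else 0).det = (z ^ 2 - 1) ^ m := by
  classical
  obtain ⟨β, φ, hφ⟩ := hσ.exists_fin_two_prod_equiv hfix
  have : Fintype β := Fintype.ofInjective (fun b => φ (0, b)) fun b b' h => by simpa using h
  have hβ : Fintype.card β = m := by
    have := Fintype.card_congr φ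
    rw [Fintype.card_prod, Fintype.card_fin] at this
    omega
  have hblocks : (z • 1 + of fun a b => if b = σ a then (1 : R) else 0).submatrix φ φ =
      !![z, 1; 1, z] ⊗ₖ (1 : Matrix β β R) := by
    ext ⟨i, b⟩ ⟨j, b'⟩
    fin_cases i <;> fin_cases j <;> simp [kroneckerMap_apply, hφ, one_apply, eq_comm]
  rw [← det_submatrix_equiv_self φ, hblocks, det_kronecker, det_fin_two_of, det_one, one_pow,
    mul_one, hβ, ← sq, mul_one]

theorem Matrix.det_smul_one_sub_transpose_mul_sub_mul_pow {R V E : Type*} [CommRing R]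
    [Fintype V] [Fintype E] [DecidableEq V] [DecidableEq E]
    (S T : Matrix V E R) (J : Matrix E E R) (hJ : J * J = 1) (hJS : J * Sᵀ = Tᵀ) (z : R) :
    (z • 1 - (Sᵀ * T - J)).det * (z ^ 2 - 1) ^ Fintype.card V =
      (z • 1 + J).det * ((z ^ 2) • 1 - z • (T * Sᵀ) + T * Tᵀ - 1).det := by
  have hsq : (z • 1 + J) * (z • 1 - J) = (z ^ 2 - 1) • 1 := by
    simp only [Matrix.add_mul, Matrix.mul_sub, Matrix.smul_mul, Matrix.mul_smul, Matrix.one_mul,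
      Matrix.mul_one, hJ]
    module
  have hJz : (z • 1 + J) * (z • Sᵀ - Tᵀ) = (z ^ 2 - 1) • Sᵀ := by
    rw [← hJS, show z • Sᵀ - J * Sᵀ = (z • 1 - J) * Sᵀ by
      rw [Matrix.sub_mul, Matrix.smul_mul, Matrix.one_mul], ← Matrix.mul_assoc, hsq,
      Matrix.smul_mul, Matrix.one_mul]
  have hblocks : fromBlocks 1 0 Sᵀ 1 * fromBlocks ((z ^ 2 - 1) • 1) T 0 (z • 1 - (Sᵀ * T - J)) =
      fromBlocks ((z ^ 2) • 1 - z • (T * Sᵀ) + T * Tᵀ - 1) T 0 (z • 1 + J) *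
        fromBlocks 1 0 (z • Sᵀ - Tᵀ) 1 := by
    simp only [fromBlocks_multiply, Matrix.one_mul, Matrix.mul_one, Matrix.zero_mul,
      Matrix.mul_zero, add_zero, zero_add, hJz, Matrix.mul_sub, Matrix.mul_smul]
    congr 1 <;> module
  have hdet := congrArg det hblocks
  simp only [det_mul, det_fromBlocks_zero₂₁, det_fromBlocks_zero₁₂, det_one, det_smul, one_mul,
    mul_one] at hdet
  rw [mul_comm, hdet, mul_comm]

namespace OrientedGraph

variable {V E : Type*} (G : OrientedGraph V E)

noncomputable def srcMatrix [DecidableEq V] : Matrix V E ℂ :=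
  of fun v e => if G.src e = v then 1 else 0

noncomputable def tgtMatrix [DecidableEq V] : Matrix V E ℂ :=
  of fun v e => if G.tgt e = v then 1 else 0

noncomputable def invMatrix [DecidableEq E] : Matrix E E ℂ :=
  of fun e f => if f = G.inv e then 1 else 0

theorem inv_involutive : Function.Involutive G.inv := G.inv_inv

theorem src_inv (e : E) : G.src (G.inv e) = G.tgt e := by
  rw [← G.tgt_inv, G.inv_inv]

theorem eq_inv_comm {e f : E} : f = G.inv e ↔ e = G.inv f := by
  rw [eq_comm, G.inv_involutive.eq_iff]

theorem invMatrix_mul_self [Fintype E] [DecidableEq E] : G.invMatrix * G.invMatrix = 1 := by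
  ext e f
  simp [invMatrix, mul_apply, one_apply, G.eq_inv_comm (f := f),
    G.inv_involutive.injective.eq_iff, eq_comm]

theorem transpose_invMatrix [DecidableEq E] : G.invMatrixᵀ = G.invMatrix := by
  ext e f
  simp [invMatrix, G.eq_inv_comm (f := e)]

theorem invMatrix_mul_transpose_srcMatrix [Fintype E] [DecidableEq V] [DecidableEq E] :
    G.invMatrix * G.srcMatrixᵀ = G.tgtMatrixᵀ := by
  ext e v
  simp only [invMatrix, srcMatrix, tgtMatrix, mul_apply, of_apply, transpose_apply, ite_mul,
    one_mul, zero_mul, Finset.sum_ite_eq', Finset.mem_univ, if_true, src_inv]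

theorem nbMatrix_eq [Fintype V] [DecidableEq V] [DecidableEq E] :
    nbMatrix G = G.srcMatrixᵀ * G.tgtMatrix - G.invMatrix := by
  ext f e
  by_cases h : e = G.inv f <;>
    simp [nbMatrix, invMatrix, srcMatrix, tgtMatrix, mul_apply, h, G.tgt_inv, eq_comm]

theorem tgtMatrix_mul_transpose_srcMatrix [Fintype E] [DecidableEq V] :
    G.tgtMatrix * G.srcMatrixᵀ = adjMatrix G := by
  ext v u
  simp [tgtMatrix, srcMatrix, adjMatrix, mul_apply, Finset.natCast_card_filter, ite_and]

theorem srcMatrix_mul_transpose_srcMatrix [Fintype E] [DecidableEq V] :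
    G.srcMatrix * G.srcMatrixᵀ = degMatrix G := by
  ext v u
  simp only [srcMatrix, degMatrix, gdeg, mul_apply, of_apply, transpose_apply, diagonal_apply,
    Finset.natCast_card_filter, ite_zero_mul_ite_zero, mul_one]
  by_cases h : v = u
  · simp [h]
  · simp only [h, if_false]
    exact Finset.sum_eq_zero fun e _ => if_neg fun he => h (he.1.symm.trans he.2)

theorem tgtMatrix_mul_transpose_tgtMatrix [Fintype E] [DecidableEq V] [DecidableEq E] :
    G.tgtMatrix * G.tgtMatrixᵀ = degMatrix G :=
  calc G.tgtMatrix * G.tgtMatrixᵀ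
    _ = (G.invMatrix * G.srcMatrixᵀ)ᵀ * (G.invMatrix * G.srcMatrixᵀ) := by
      rw [invMatrix_mul_transpose_srcMatrix, transpose_transpose]
    _ = G.srcMatrix * (G.invMatrix * G.invMatrix) * G.srcMatrixᵀ := by
      rw [transpose_mul, transpose_transpose, transpose_invMatrix]
      simp only [Matrix.mul_assoc]
    _ = degMatrix G := by
      rw [invMatrix_mul_self, Matrix.mul_one, srcMatrix_mul_transpose_srcMatrix]

theorem det_smul_one_add_invMatrix [Fintype E] [DecidableEq E] {m : ℕ}
    (hm : Fintype.card E = 2 * m) (z : ℂ) : (z • 1 + G.invMatrix).det = (z ^ 2 - 1) ^ m :=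
  det_smul_one_add_of_involutive G.inv_involutive G.inv_ne hm z

end OrientedGraph

/-- `m` is the number of undirected edges, so `χ − 1 = m − |V|`; as this exponent may be negative,
the identity is multiplied through by `(z² − 1)^{|V|}`. -/
theorem stmt1 (G : OrientedGraph V E) (m : ℕ) (hm : Fintype.card E = 2 * m) (z : ℂ) :
    (z • (1 : Matrix E E ℂ) - nbMatrix G).det * (z ^ 2 - 1) ^ (Fintype.card V) =
      (z ^ 2 - 1) ^ m *
        ((z ^ 2) • (1 : Matrix V V ℂ) - z • adjMatrix G + degMatrix G
          - (1 : Matrix V V ℂ)).det := by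
  have h := det_smul_one_sub_transpose_mul_sub_mul_pow G.srcMatrix G.tgtMatrix G.invMatrix
    G.invMatrix_mul_self G.invMatrix_mul_transpose_srcMatrix z
  rwa [← G.nbMatrix_eq, G.tgtMatrix_mul_transpose_srcMatrix, G.tgtMatrix_mul_transpose_tgtMatrix,
    G.det_smul_one_add_invMatrix hm] at h
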